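/- arXiv:1409.4667 — 2 statements merged into one kernel-verified Lean document; each statement's English description precedes it below -/
import Mathlib

section
/- Let ν be a Borel probability measure on a complete separable metric space X. Then there exists a measurable map T from the Cantor space {0,1}^ℕ, equipped with the standard uniform (coin-flipping) measure P, to X such that the pushforward of P under T equals ν. -/
/-!
Binary expansion `ω ↦ ∑ ωᵢ 2^-(i+1)` pushes the coin-flipping measure to Lebesgue measure on
`[0,1]`. Indeed, its a.e. inverse, the binary digit map, sends Lebesgue measure to a probability
measure on the Cantor space giving every cylinder of length `n` mass at most `2^-n`, since the
reals with prescribed first `n` digits lie within `2^-n` of each other; as the cylinders of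
length `n` partition the space, each gets mass exactly `2^-n`, so this measure is the
coin-flipping one. On a standard Borel space every probability measure is the image of Lebesgue
measure on `[0,1]` under a measurable map, and composing gives `T`.
-/

open MeasureTheory Set unitInterval

def finPrefix {α : Type*} (n : ℕ) (ω : ℕ → α) : Fin n → α := fun i => ω i

@[fun_prop]
lemma measurable_finPrefix {α : Type*} [MeasurableSpace α] (n : ℕ) :
    Measurable (finPrefix (α := α) n) :=
  measurable_pi_lambda _ fun i => measurable_pi_apply (i : ℕ)

namespace MeasureTheory.Measure

variable {α : Type*} [MeasurableSpace α]

lemma ext_of_forall_map_finPrefix {μ ν : Measure (ℕ → α)} [IsFiniteMeasure ν]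
    (h : ∀ n, μ.map (finPrefix n) = ν.map (finPrefix n)) : μ = ν := by
  refine IsProjectiveLimit.unique (P := fun s => ν.map s.restrict) (fun s => ?_) (fun _ => rfl)
  show μ.map s.restrict = ν.map s.restrict
  have hs : ∀ i ∈ s, i < s.sup id + 1 := fun i hi => Nat.lt_succ_of_le (s.le_sup (f := id) hi)
  have hrestrict : s.restrict = (fun (x : Fin (s.sup id + 1) → α) (i : s) => x ⟨i, hs i i.2⟩) ∘
      finPrefix (s.sup id + 1) := rfl
  rw [hrestrict, ← map_map (by fun_prop) (by fun_prop), h, map_map (by fun_prop) (by fun_prop)]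

lemma le_of_forall_singleton_le {β : Type*} [MeasurableSpace β] [MeasurableSingletonClass β]
    [Finite β] {μ ν : Measure β} (h : ∀ b, μ {b} ≤ ν {b}) : μ ≤ ν := fun s => by
  rw [← s.toFinite.coe_toFinset, ← sum_measure_singleton, ← sum_measure_singleton]
  exact Finset.sum_le_sum fun b _ => h b

lemma ext_of_forall_prefix_le [MeasurableSingletonClass α] [Finite α] {μ ν : Measure (ℕ → α)}
    [IsProbabilityMeasure μ] [IsProbabilityMeasure ν]
    (h : ∀ n (b : Fin n → α), μ {ω | ∀ i : Fin n, ω i = b i} ≤ ν {ω | ∀ i : Fin n, ω i = b i}) :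
    μ = ν := by
  refine ext_of_forall_map_finPrefix fun n => ?_
  have := isProbabilityMeasure_map (μ := μ) (measurable_finPrefix n).aemeasurable
  have := isProbabilityMeasure_map (μ := ν) (measurable_finPrefix n).aemeasurable
  refine eq_of_le_of_isProbabilityMeasure <| le_of_forall_singleton_le fun b => ?_
  have hb : finPrefix n ⁻¹' {b} = {ω | ∀ i : Fin n, ω i = b i} := by
    ext ω
    simp [finPrefix, funext_iff]
  rw [map_apply (by fun_prop) (measurableSet_singleton b),
    map_apply (by fun_prop) (measurableSet_singleton b), hb]
  exact h n b

end MeasureTheory.Measure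

namespace unitInterval

noncomputable def ofBinaryDigits (ω : ℕ → Bool) : I :=
  ⟨Real.ofDigits (finTwoEquiv.symm ∘ ω), Real.ofDigits_nonneg _, Real.ofDigits_le_one _⟩

noncomputable def binaryDigits (x : I) : ℕ → Bool :=
  finTwoEquiv ∘ Real.digits x 2

lemma measurable_ofBinaryDigits : Measurable ofBinaryDigits :=
  (Real.continuous_ofDigits.comp (continuous_pi fun i =>
    continuous_of_discreteTopology.comp (continuous_apply i))).subtype_mk _ |>.measurable

lemma measurable_binaryDigits : Measurable binaryDigits :=
  measurable_pi_lambda _ fun i =>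
    (measurable_from_nat (f := fun k => finTwoEquiv (Fin.ofNat 2 k))).comp
      (Nat.measurable_floor.comp (measurable_subtype_coe.mul_const (((2 : ℕ) : ℝ) ^ (i + 1))))

lemma ofBinaryDigits_binaryDigits {x : I} (hx : x ≠ 1) : ofBinaryDigits (binaryDigits x) = x := by
  have hx' : (x : ℝ) ∈ Ico 0 1 := ⟨x.2.1, lt_of_le_of_ne x.2.2 (Subtype.coe_ne_coe.2 hx)⟩
  refine Subtype.ext ?_
  change Real.ofDigits (finTwoEquiv.symm ∘ finTwoEquiv ∘ Real.digits x 2) = x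
  rw [← Function.comp_assoc, Equiv.symm_comp_self, Function.id_comp,
    Real.ofDigits_digits one_lt_two hx']

lemma dist_ofBinaryDigits_le {ω ω' : ℕ → Bool} {n : ℕ} (h : ∀ i < n, ω i = ω' i) :
    dist (ofBinaryDigits ω) (ofBinaryDigits ω') ≤ ((2 : ℝ) ^ n)⁻¹ := by
  rw [Subtype.dist_eq, Real.dist_eq]
  exact_mod_cast Real.abs_ofDigits_sub_ofDigits_le (b := 2) fun i hi => by simp [h i hi]

open Metric in
lemma volume_binaryDigits_preimage_prefix_le (n : ℕ) (b : Fin n → Bool) :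
    volume (binaryDigits ⁻¹' {ω | ∀ i : Fin n, ω i = b i}) ≤ (1 / 2) ^ n := by
  set s := binaryDigits ⁻¹' {ω | ∀ i : Fin n, ω i = b i}
  -- `Real.digits 1 2` is the zero sequence, so `1` must be discarded: it lies in the cylinder of
  -- zeros, far from the other points of that cylinder.
  calc volume s ≤ volume (s \ {1}) := (measure_sdiff_null (measure_singleton 1)).ge
    _ ≤ ediam (Subtype.val '' (s \ {1})) := volume_apply.trans_le (Real.volume_le_diam _)
    _ ≤ (1 / 2) ^ n := by
        refine ediam_image_le_iff.2 fun x hx y hy => ?_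
        rw [← ofBinaryDigits_binaryDigits hx.2, ← ofBinaryDigits_binaryDigits hy.2, edist_dist]
        refine ENNReal.ofReal_le_of_le_toReal ?_
        refine (dist_ofBinaryDigits_le fun i hi =>
          (hx.1 ⟨i, hi⟩).trans (hy.1 ⟨i, hi⟩).symm).trans_eq ?_
        simp

lemma map_binaryDigits {P : Measure (ℕ → Bool)} [IsProbabilityMeasure P]
    (hP : ∀ n (b : Fin n → Bool), P {ω | ∀ i : Fin n, ω i = b i} = (1 / 2) ^ n) :
    volume.map binaryDigits = P := by
  have := Measure.isProbabilityMeasure_map (μ := (volume : Measure I))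
    measurable_binaryDigits.aemeasurable
  refine Measure.ext_of_forall_prefix_le fun n b => ?_
  rw [Measure.map_apply measurable_binaryDigits (by measurability), hP]
  exact volume_binaryDigits_preimage_prefix_le n b

lemma map_ofBinaryDigits {P : Measure (ℕ → Bool)} [IsProbabilityMeasure P]
    (hP : ∀ n (b : Fin n → Bool), P {ω | ∀ i : Fin n, ω i = b i} = (1 / 2) ^ n) :
    P.map ofBinaryDigits = volume := by
  rw [← map_binaryDigits hP, Measure.map_map measurable_ofBinaryDigits measurable_binaryDigits]
  conv_rhs => rw [← Measure.map_id (μ := volume)]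
  refine Measure.map_congr ?_
  filter_upwards [measure_eq_zero_iff_ae_notMem.1 (measure_singleton (1 : I))] with x hx
  exact ofBinaryDigits_binaryDigits hx

end unitInterval

theorem stmt12 {X : Type*} [MetricSpace X] [CompleteSpace X]
    [TopologicalSpace.SeparableSpace X] [MeasurableSpace X] [BorelSpace X]
    (ν : Measure X) [IsProbabilityMeasure ν]
    (P : Measure (ℕ → Bool)) [IsProbabilityMeasure P]
    (hP : ∀ (n : ℕ) (b : Fin n → Bool),
      P {ω | ∀ i : Fin n, ω i = b i} = (1 / 2 : ENNReal) ^ n) :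
    ∃ T : (ℕ → Bool) → X, Measurable T ∧ P.map T = ν := by
  have := nonempty_of_isProbabilityMeasure ν
  obtain ⟨f, hf, hfν⟩ := ν.exists_measurable_map_eq
  refine ⟨f ∘ ofBinaryDigits, hf.comp measurable_ofBinaryDigits, ?_⟩
  rw [← Measure.map_map hf measurable_ofBinaryDigits, map_ofBinaryDigits hP, hfν]
end

section
/- Tail bound for the Lévy–Ciesielski construction: let (A_{n,k}) for n ≥ 0, 0 ≤ k < 2ⁿ be independent standard normal random variables. Then for every m ≥ 6, P( |A_{n,k}| < n for all n ≥ m and all 0 ≤ k < 2ⁿ ) ≥ 1 − 2^{−m}. -/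
/-!
Union bound. By the Chernoff bound a standard Gaussian satisfies `P(|A| ≥ n) ≤ 2 e^{-n²/2}`, so
the `2ⁿ` variables of level `n` together contribute at most `2ⁿ⁺¹ e^{-n²/2} ≤ 2^{-(n+1)}`; the last
step is `4ⁿ⁺¹ ≤ e^{2(n+1)} ≤ e^{n²/2}`, using `4 ≤ e²` and `n ≥ 5`. Summing over `n ≥ m` gives
`2^{-m}`.
-/

open MeasureTheory ProbabilityTheory Real
open scoped NNReal

lemma two_pow_mul_two_mul_exp_le {n : ℕ} (hn : 5 ≤ n) :
    2 ^ n * (2 * exp (-(n : ℝ) ^ 2 / 2)) ≤ 2⁻¹ ^ (n + 1) := by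
  have hn' : (5 : ℝ) ≤ n := by exact_mod_cast hn
  have he2 : (4 : ℝ) ≤ exp 2 := by
    have := exp_one_gt_d9
    rw [show (2 : ℝ) = 1 + 1 by norm_num, exp_add]
    nlinarith
  have hpow : (4 : ℝ) ^ (n + 1) ≤ exp ((n : ℝ) ^ 2 / 2) :=
    calc (4 : ℝ) ^ (n + 1) ≤ exp 2 ^ (n + 1) := by gcongr
      _ = exp (2 * (n + 1)) := by rw [← exp_nat_mul]; push_cast; ring_nf
      _ ≤ exp ((n : ℝ) ^ 2 / 2) := exp_le_exp.mpr (by nlinarith)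
  have hsplit : 2 ^ n * (2 * exp (-(n : ℝ) ^ 2 / 2))
      = 4 ^ (n + 1) / exp ((n : ℝ) ^ 2 / 2) * 2⁻¹ ^ (n + 1) := by
    rw [neg_div, exp_neg, show (4 : ℝ) = 2 * 2 by norm_num, mul_pow, inv_pow]
    field_simp
    ring
  rw [hsplit]
  exact mul_le_of_le_one_left (by positivity) ((div_le_one (exp_pos _)).mpr hpow)

namespace ProbabilityTheory

variable {Ω : Type*} [MeasurableSpace Ω] {P : Measure Ω}

lemma hasSubgaussianMGF_id_gaussianReal (v : ℝ≥0) : HasSubgaussianMGF id v (gaussianReal 0 v) where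
  integrable_exp_mul := integrable_exp_mul_gaussianReal
  mgf_le t := by simp [mgf_id_gaussianReal]

lemma HasSubgaussianMGF.measure_abs_ge_le [IsFiniteMeasure P] {X : Ω → ℝ} {c : ℝ≥0}
    (h : HasSubgaussianMGF X c P) {ε : ℝ} (hε : 0 ≤ ε) :
    P {ω | ε ≤ |X ω|} ≤ ENNReal.ofReal (2 * exp (-ε ^ 2 / (2 * c))) := by
  have hsub : {ω | ε ≤ |X ω|} ⊆ {ω | ε ≤ X ω} ∪ {ω | ε ≤ (-X) ω} :=
    fun ω (hω : ε ≤ |X ω|) ↦ le_abs.mp hω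
  calc P {ω | ε ≤ |X ω|} ≤ P {ω | ε ≤ X ω} + P {ω | ε ≤ (-X) ω} :=
        (measure_mono hsub).trans (measure_union_le _ _)
    _ = ENNReal.ofReal (P.real {ω | ε ≤ X ω}) + ENNReal.ofReal (P.real {ω | ε ≤ (-X) ω}) := by
        rw [ofReal_measureReal, ofReal_measureReal]
    _ ≤ ENNReal.ofReal (exp (-ε ^ 2 / (2 * c))) + ENNReal.ofReal (exp (-ε ^ 2 / (2 * c))) := by
        gcongr
        exacts [h.measure_ge_le hε, h.neg.measure_ge_le hε]
    _ = ENNReal.ofReal (2 * exp (-ε ^ 2 / (2 * c))) := by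
        rw [← ENNReal.ofReal_add (by positivity) (by positivity), ← two_mul]

lemma measure_abs_ge_le_of_map_eq_gaussianReal {X : Ω → ℝ} (hX : P.map X = gaussianReal 0 1)
    {ε : ℝ} (hε : 0 ≤ ε) : P {ω | ε ≤ |X ω|} ≤ ENNReal.ofReal (2 * exp (-ε ^ 2 / 2)) := by
  have hXm : AEMeasurable X P := .of_map_ne_zero (by simp [hX, IsProbabilityMeasure.ne_zero])
  have : IsProbabilityMeasure (P.map X) := by rw [hX]; infer_instance
  have := Measure.isProbabilityMeasure_of_map X (μ := P)
  have hsg : HasSubgaussianMGF X 1 P := by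
    rw [← HasSubgaussianMGF.id_map_iff hXm, hX]
    exact hasSubgaussianMGF_id_gaussianReal 1
  simpa using hsg.measure_abs_ge_le hε

lemma measure_exists_abs_ge_le_inv_two_pow
    (A : ℕ → ℕ → Ω → ℝ) (hA : ∀ n k, P.map (A n k) = gaussianReal 0 1) {m : ℕ} (hm : 5 ≤ m) :
    P {ω | ∃ n, m ≤ n ∧ ∃ k < 2 ^ n, (n : ℝ) ≤ |A n k ω|} ≤ 2⁻¹ ^ m := by
  have hlevel : ∀ n, m ≤ n →
      ∑ k ∈ Finset.range (2 ^ n), P {ω | (n : ℝ) ≤ |A n k ω|} ≤ 2⁻¹ ^ (n + 1) := by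
    intro n hn
    calc ∑ k ∈ Finset.range (2 ^ n), P {ω | (n : ℝ) ≤ |A n k ω|}
        ≤ ∑ k ∈ Finset.range (2 ^ n), ENNReal.ofReal (2 * exp (-(n : ℝ) ^ 2 / 2)) :=
          Finset.sum_le_sum fun k _ ↦
            measure_abs_ge_le_of_map_eq_gaussianReal (hA n k) n.cast_nonneg
      _ = ENNReal.ofReal (2 ^ n * (2 * exp (-(n : ℝ) ^ 2 / 2))) := by
          rw [Finset.sum_const, Finset.card_range, nsmul_eq_mul,
            ENNReal.ofReal_mul (p := 2 ^ n) (by positivity), ENNReal.ofReal_pow zero_le_two,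
            ENNReal.ofReal_ofNat, Nat.cast_pow, Nat.cast_ofNat]
      _ ≤ ENNReal.ofReal (2⁻¹ ^ (n + 1)) :=
          ENNReal.ofReal_le_ofReal (two_pow_mul_two_mul_exp_le (hm.trans hn))
      _ = 2⁻¹ ^ (n + 1) := by
          rw [ENNReal.ofReal_pow (by norm_num), ENNReal.ofReal_inv_of_pos two_pos,
            ENNReal.ofReal_ofNat]
  calc P {ω | ∃ n, m ≤ n ∧ ∃ k < 2 ^ n, (n : ℝ) ≤ |A n k ω|}
      ≤ P (⋃ j, ⋃ k ∈ Finset.range (2 ^ (j + m)), {ω | ((j + m : ℕ) : ℝ) ≤ |A (j + m) k ω|}) := by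
        refine measure_mono fun ω ⟨n, hn, k, hk, hω⟩ ↦ ?_
        obtain ⟨j, rfl⟩ := Nat.exists_eq_add_of_le' hn
        simp only [Set.mem_iUnion]
        exact ⟨j, k, Finset.mem_range.mpr hk, hω⟩
    _ ≤ ∑' j, ∑ k ∈ Finset.range (2 ^ (j + m)), P {ω | ((j + m : ℕ) : ℝ) ≤ |A (j + m) k ω|} :=
        (measure_iUnion_le _).trans (ENNReal.tsum_le_tsum fun j ↦ measure_biUnion_finset_le _ _)
    _ ≤ ∑' j, 2⁻¹ ^ (j + m + 1) := ENNReal.tsum_le_tsum fun j ↦ hlevel _ (Nat.le_add_left m j)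
    _ = 2⁻¹ ^ m := by
        simp_rw [add_right_comm _ m, pow_add _ _ m, ENNReal.tsum_mul_right,
          ENNReal.tsum_geometric_add_one, ENNReal.one_sub_inv_two, inv_inv,
          ENNReal.inv_mul_cancel two_ne_zero ENNReal.ofNat_ne_top, one_mul]

end ProbabilityTheory

theorem stmt18_general {Ω : Type*} [MeasurableSpace Ω] (P : Measure Ω) [IsProbabilityMeasure P]
    (A : ℕ → ℕ → Ω → ℝ)
    (hgauss : ∀ n k, P.map (A n k) = gaussianReal 0 1)
    (m : ℕ) (hm : 6 ≤ m) :
    ENNReal.ofReal (1 - (2 : ℝ) ^ (-(m : ℤ))) ≤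
      P {ω | ∀ n, m ≤ n → ∀ k, k < 2 ^ n → |A n k ω| < (n : ℝ)} := by
  set bad := {ω | ∃ n, m ≤ n ∧ ∃ k < 2 ^ n, (n : ℝ) ≤ |A n k ω|}
  have hgood : {ω | ∀ n, m ≤ n → ∀ k, k < 2 ^ n → |A n k ω| < (n : ℝ)} = badᶜ := by
    ext ω
    simp [bad]
  have hbad : P bad ≤ 2⁻¹ ^ m := measure_exists_abs_ge_le_inv_two_pow A hgauss (by omega)
  have hcover : 1 ≤ P bad + P badᶜ := by
    simpa using measure_univ_le_add_compl (μ := P) bad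
  rw [hgood, zpow_neg, zpow_natCast, ENNReal.ofReal_sub _ (by positivity), ENNReal.ofReal_one,
    ENNReal.ofReal_inv_of_pos (by positivity), ENNReal.ofReal_pow zero_le_two,
    ENNReal.ofReal_ofNat, ENNReal.inv_pow]
  calc 1 - 2⁻¹ ^ m ≤ 1 - P bad := tsub_le_tsub_left hbad 1
    _ ≤ P badᶜ := tsub_le_iff_left.mpr hcover

theorem stmt18 {Ω : Type*} [MeasurableSpace Ω] (P : Measure Ω) [IsProbabilityMeasure P]
    (A : ℕ → ℕ → Ω → ℝ)
    (hmeas : ∀ n k, Measurable (A n k))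
    (hindep : iIndepFun
      (fun p : ℕ × ℕ => A p.1 p.2) P)
    (hgauss : ∀ n k, P.map (A n k) = gaussianReal 0 1)
    (m : ℕ) (hm : 6 ≤ m) :
    ENNReal.ofReal (1 - (2 : ℝ) ^ (-(m : ℤ))) ≤
      P {ω | ∀ n, m ≤ n → ∀ k, k < 2 ^ n → |A n k ω| < (n : ℝ)} :=
  stmt18_general P A hgauss m hm
end
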